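/- arXiv:1306.5322 — 2 statements merged into one kernel-verified Lean document; each statement's English description precedes it below -/
import Mathlib

section
/- Let m ≥ 1 be an integer, B > 0 and ε0 > 0 real numbers, and set δ = (2ε0)^{1/(m+1)}·B^{m/(m+1)}. If 2·(1 + mδ)^{(m+1)/m} ≤ B, then mδ/2 + A_m(δ)·ε0 < (m+1)·(B/2)^{m/(m+1)}·ε0^{1/(m+1)}. -/
/-!
Put `t = m + 1`. The choice of `δ` makes `δ ^ t = 2 ε0 B ^ m` and turns the right-hand side
into `t δ / 2`, so it suffices that `A_m(δ) ε0 < δ / 2`, i.e. that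
`∑ C(m, j) (1 + j δ) ^ t < B ^ m`. Bounding every `1 + j δ` by `1 + m δ` (strictly for `j = 0`)
gives the sum `< 2 ^ m (1 + m δ) ^ t`, which is at most `B ^ m` by the `m`-th power of the
hypothesis on `B`.
-/

/-- `A_m(δ) = δ^{−m} ∑_{j=0}^{m} C(m, j) (1 + jδ)^{m+1}`. -/
noncomputable def Am (m : ℕ) (δ : ℝ) : ℝ :=
  (δ ^ m)⁻¹ * ∑ j ∈ Finset.range (m + 1), (m.choose j : ℝ) * (1 + j * δ) ^ (m + 1)

open Finset Real

lemma sum_choose_mul_one_add_pow_lt {m n : ℕ} (hm : m ≠ 0) (hn : n ≠ 0) {δ : ℝ} (hδ : 0 < δ) :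
    ∑ j ∈ range (m + 1), (m.choose j : ℝ) * (1 + j * δ) ^ n < 2 ^ m * (1 + m * δ) ^ n := by
  have hone : (1 : ℝ) < 1 + m * δ :=
    lt_add_of_pos_right 1 (mul_pos (by exact_mod_cast Nat.pos_of_ne_zero hm) hδ)
  calc ∑ j ∈ range (m + 1), (m.choose j : ℝ) * (1 + j * δ) ^ n
      < ∑ j ∈ range (m + 1), (m.choose j : ℝ) * (1 + m * δ) ^ n :=
        sum_lt_sum (fun j hj => by
            have hjm : (j : ℝ) ≤ m := by exact_mod_cast Nat.lt_succ_iff.mp (mem_range.mp hj)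
            gcongr)
          ⟨0, by simp, by simpa using one_lt_pow₀ hone hn⟩
    _ = 2 ^ m * (1 + m * δ) ^ n := by
        rw [← sum_mul, ← Nat.cast_sum, Nat.sum_range_choose]; push_cast; rfl

lemma mul_rpow_div_pow {c x : ℝ} (hx : 0 ≤ x) (n : ℕ) {m : ℕ} (hm : m ≠ 0) :
    (c * x ^ ((n : ℝ) / m)) ^ m = c ^ m * x ^ n := by
  rw [mul_pow, ← rpow_natCast (x ^ _), ← rpow_mul hx, div_mul_cancel₀ _ (by exact_mod_cast hm),
    rpow_natCast]

lemma rpow_one_div_mul_rpow_div_pow_succ {a b : ℝ} (ha : 0 ≤ a) (hb : 0 ≤ b) (n : ℕ) :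
    (a ^ (1 / ((n : ℝ) + 1)) * b ^ ((n : ℝ) / ((n : ℝ) + 1))) ^ (n + 1) = a * b ^ n := by
  have hn : (n : ℝ) + 1 ≠ 0 := by positivity
  rw [mul_pow, ← rpow_natCast (a ^ _), ← rpow_natCast (b ^ _), ← rpow_mul ha, ← rpow_mul hb]
  push_cast
  rw [one_div_mul_cancel hn, div_mul_cancel₀ _ hn, rpow_one, rpow_natCast]

lemma mul_rpow_one_div_mul_rpow_div {a b c : ℝ} (ha : 0 ≤ a) (hb : 0 ≤ b) (hc : 0 < c) (n : ℕ) :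
    (c * a) ^ (1 / ((n : ℝ) + 1)) * b ^ ((n : ℝ) / ((n : ℝ) + 1)) =
      c * (b / c) ^ ((n : ℝ) / ((n : ℝ) + 1)) * a ^ (1 / ((n : ℝ) + 1)) := by
  have hc_split : c ^ (1 / ((n : ℝ) + 1)) * c ^ ((n : ℝ) / ((n : ℝ) + 1)) = c := by
    rw [← rpow_add hc, ← add_div, add_comm, div_self (by positivity), rpow_one]
  conv_lhs => rw [← mul_div_cancel₀ b hc.ne']
  rw [mul_rpow hc.le ha, mul_rpow hc.le (div_nonneg hb hc.le)]
  linear_combination (b / c) ^ ((n : ℝ) / ((n : ℝ) + 1)) * a ^ (1 / ((n : ℝ) + 1)) * hc_split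

lemma Am_mul_pow_succ (m : ℕ) {δ : ℝ} (hδ : δ ≠ 0) :
    Am m δ * δ ^ (m + 1) =
      δ * ∑ j ∈ range (m + 1), (m.choose j : ℝ) * (1 + j * δ) ^ (m + 1) := by
  rw [Am, pow_succ]
  linear_combination δ * (∑ j ∈ range (m + 1), (m.choose j : ℝ) * (1 + j * δ) ^ (m + 1)) *
    inv_mul_cancel₀ (pow_ne_zero m hδ)

/-- Lemma 2.4. -/
theorem delta_Am_bound (m : ℕ) (hm : 1 ≤ m) (B ε0 : ℝ) (hB : 0 < B)
    (hε0 : 0 < ε0) (δ : ℝ)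
    (hδ : δ = (2 * ε0) ^ (1 / ((m : ℝ) + 1)) * B ^ ((m : ℝ) / ((m : ℝ) + 1)))
    (hcond : 2 * (1 + m * δ) ^ (((m : ℝ) + 1) / m) ≤ B) :
    m * δ / 2 + Am m δ * ε0 <
      ((m : ℝ) + 1) * (B / 2) ^ ((m : ℝ) / ((m : ℝ) + 1)) *
        ε0 ^ (1 / ((m : ℝ) + 1)) := by
  have hm0 : m ≠ 0 := Nat.one_le_iff_ne_zero.mp hm
  have hδ0 : 0 < δ := by rw [hδ]; positivity
  have hδ_pow : δ ^ (m + 1) = 2 * ε0 * B ^ m := by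
    rw [hδ, rpow_one_div_mul_rpow_div_pow_succ (by positivity) hB.le]
  have hrhs : (B / 2) ^ ((m : ℝ) / ((m : ℝ) + 1)) * ε0 ^ (1 / ((m : ℝ) + 1)) = δ / 2 := by
    rw [hδ, mul_rpow_one_div_mul_rpow_div hε0.le hB.le two_pos]; ring
  have hsum : ∑ j ∈ range (m + 1), (m.choose j : ℝ) * (1 + j * δ) ^ (m + 1) < B ^ m := by
    have hbase : 0 ≤ 1 + m * δ := by positivity
    calc _ < 2 ^ m * (1 + m * δ) ^ (m + 1) :=
          sum_choose_mul_one_add_pow_lt hm0 (Nat.succ_ne_zero m) hδ0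
      _ = (2 * (1 + m * δ) ^ (((m + 1 : ℕ) : ℝ) / m)) ^ m := (mul_rpow_div_pow hbase _ hm0).symm
      _ ≤ B ^ m := by push_cast; gcongr
  have hAm : Am m δ * ε0 < δ / 2 := by
    have hε0_eq : ε0 = δ ^ (m + 1) / (2 * B ^ m) := by field_simp; linarith
    rw [hε0_eq, ← mul_div_assoc, Am_mul_pow_succ m hδ0.ne', div_lt_div_iff₀ (by positivity) two_pos]
    nlinarith [mul_lt_mul_of_pos_left hsum hδ0]
  rw [mul_assoc, hrhs]
  linarith
end

section
/- Let A ≥ 1 and q ≥ 987 be real numbers, set δ = π/(0.4923·q^{1/2}·(log q)²), and let β0 be a real number with 1/2 < β0 ≤ 1 − δ. Let x be a real number with x ≥ exp(exp(7.7)) and (0.4923·A/π)·q^{1/2}·(log q)² < (log x)/(log log x). Then x^{−β0}/(1−β0) + x^{β0−1}/β0 < 1.0043/(log x)^{A}. -/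
/-!
With `L = log x` both terms are exponentials in `L`. The second term `exp ((β₀ - 1) L) / β₀`
increases with `β₀` once `β₀ L ≥ 1`, so it is at most `exp (-δ L) / (1 - δ)`, and `q ≥ 987` makes
`δ < 0.004275`, whence `1 / (1 - δ) < 1.004294`. The first term is at most `exp (-L / 2) / δ`, and
the hypothesis on `x` reads `A log L < δ L`, so `1 / δ < L` and the first term is negligible against
`exp (-δ L)`. Finally `exp (-δ L) < L ^ (-A)`, again by `A log L < δ L`.
-/

open Real

lemma log_987_gt_d4 : 6.8939 < log 987 := by
  have h1024 : log 1024 = 10 * log 2 := by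
    rw [show (1024 : ℝ) = 2 ^ 10 by norm_num, log_pow]
    norm_num
  have hratio : 1 - (987 / 1024 : ℝ)⁻¹ ≤ log (987 / 1024) := one_sub_inv_le_log_of_pos (by norm_num)
  rw [log_div (by norm_num) (by norm_num), h1024] at hratio
  norm_num at hratio
  linarith [log_two_gt_d9]

lemma siegel_denominator_ge {q : ℝ} (hq : 987 ≤ q) :
    735 ≤ 0.4923 * q ^ ((1 : ℝ) / 2) * log q ^ 2 := by
  have hsqrt : 31.416 ≤ q ^ ((1 : ℝ) / 2) := by
    rw [← sqrt_eq_rpow]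
    exact le_sqrt_of_sq_le (by linarith)
  have hlog : 6.8939 < log q := log_987_gt_d4.trans_le (log_le_log (by norm_num) hq)
  have hlog_sq : 47.525 ≤ log q ^ 2 := by nlinarith
  nlinarith

lemma thousand_lt_exp_seven : 1000 < exp 7 := by
  have h : exp 7 = exp 1 ^ 7 := by rw [← exp_nat_mul]; norm_num
  rw [h]
  calc (1000 : ℝ) < 2.7182818283 ^ 7 := by norm_num
    _ ≤ exp 1 ^ 7 := pow_le_pow_left₀ (by norm_num) exp_one_gt_d9.le 7

lemma exp_sub_one_mul_div_le {L β b : ℝ} (hβ : 0 < β) (hβL : 1 ≤ β * L) (hβb : β ≤ b) :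
    exp ((β - 1) * L) / β ≤ exp ((b - 1) * L) / b := by
  have key : b ≤ β * exp ((b - β) * L) :=
    calc b ≤ β * (1 + (b - β) * L) := by nlinarith
      _ ≤ β * exp ((b - β) * L) := by gcongr; linarith [add_one_le_exp ((b - β) * L)]
  rw [div_le_div_iff₀ hβ (hβ.trans_le hβb),
    show (b - 1) * L = (β - 1) * L + (b - β) * L by ring, exp_add]
  nlinarith [exp_pos ((β - 1) * L)]

lemma mul_exp_neg_half_le {L δ : ℝ} (hL : 1000 ≤ L) (hδ : δ ≤ 1 / 20) :
    L * exp (-(L / 2)) ≤ 0.000001 * exp (-(δ * L)) := by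
  have hgrowth : 10 ^ 6 * L ≤ exp ((1 / 2 - δ) * L) :=
    calc 10 ^ 6 * L ≤ (9 / 20 * L) ^ 4 / (Nat.factorial 4) := by
          norm_num [Nat.factorial]; nlinarith [pow_le_pow_left₀ (by norm_num) hL 3]
      _ ≤ exp (9 / 20 * L) := pow_div_factorial_le_exp _ (by positivity) 4
      _ ≤ exp ((1 / 2 - δ) * L) := exp_le_exp.2 (by nlinarith)
  rw [show -(δ * L) = -(L / 2) + (1 / 2 - δ) * L by ring, exp_add]
  nlinarith [exp_pos (-(L / 2))]

lemma siegel_bound_of_log {L δ β : ℝ} (hL : 1000 ≤ L) (hδ : 0 < δ) (hδ_le : δ ≤ 0.004275)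
    (hδL : 1 < δ * L) (hβ1 : 1 / 2 < β) (hβ2 : β ≤ 1 - δ) :
    exp (-β * L) / (1 - β) + exp ((β - 1) * L) / β ≤ 1.0043 * exp (-(δ * L)) := by
  have hfirst : exp (-β * L) / (1 - β) ≤ 0.000001 * exp (-(δ * L)) :=
    calc exp (-β * L) / (1 - β) ≤ exp (-(L / 2)) / δ :=
          div_le_div₀ (exp_pos _).le (exp_le_exp.2 (by nlinarith)) hδ (by linarith)
      _ ≤ L * exp (-(L / 2)) := by
          rw [div_le_iff₀ hδ]; nlinarith [exp_pos (-(L / 2))]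
      _ ≤ 0.000001 * exp (-(δ * L)) := mul_exp_neg_half_le hL (by linarith)
  have hsecond : exp ((β - 1) * L) / β ≤ 1.004294 * exp (-(δ * L)) :=
    calc exp ((β - 1) * L) / β ≤ exp ((1 - δ - 1) * L) / (1 - δ) :=
          exp_sub_one_mul_div_le (by linarith) (by nlinarith) hβ2
      _ ≤ 1.004294 * exp (-(δ * L)) := by
          rw [div_le_iff₀ (by linarith), show (1 - δ - 1) * L = -(δ * L) by ring]
          nlinarith [exp_pos (-(δ * L))]
  linarith [exp_pos (-(δ * L))]

lemma exp_neg_mul_lt_inv_rpow {L δ A : ℝ} (hL : 0 < L) (h : A * log L < δ * L) :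
    exp (-(δ * L)) < (L ^ A)⁻¹ := by
  rw [rpow_def_of_pos hL, ← exp_neg]
  exact exp_lt_exp.2 (by linarith)

open Real in
/-- The Siegel-zero contribution bound used in the proof of Theorem 2. -/
theorem siegel_zero_contribution (A q : ℝ) (hA : 1 ≤ A) (hq : 987 ≤ q)
    (δ : ℝ) (hδ : δ = π / (0.4923 * q ^ ((1 : ℝ) / 2) * Real.log q ^ 2))
    (β0 : ℝ) (hβ1 : 1 / 2 < β0) (hβ2 : β0 ≤ 1 - δ)
    (x : ℝ) (hx : Real.exp (Real.exp 7.7) ≤ x)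
    (hcond : 0.4923 * A / π * q ^ ((1 : ℝ) / 2) * Real.log q ^ 2 <
      Real.log x / Real.log (Real.log x)) :
    x ^ (-β0) / (1 - β0) + x ^ (β0 - 1) / β0 < 1.0043 / Real.log x ^ A := by
  have hx0 : 0 < x := (exp_pos _).trans_le hx
  set L := log x
  have hL : exp 7.7 ≤ L := (le_log_iff_exp_le hx0).2 hx
  have hL0 : 0 < L := (exp_pos _).trans_le hL
  have hlogL : 7.7 ≤ log L := (le_log_iff_exp_le hL0).2 hL
  have hD := siegel_denominator_ge hq
  have hδ0 : 0 < δ := hδ ▸ div_pos pi_pos (by linarith)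
  have hδ_le : δ ≤ 0.004275 := by
    rw [hδ, div_le_iff₀ (by linarith)]
    nlinarith [pi_lt_d4]
  have hAδ : A * log L < δ * L := by
    rw [show 0.4923 * A / π * q ^ ((1 : ℝ) / 2) * log q ^ 2 = A / δ by
      rw [hδ]; field_simp [pi_pos.ne'], div_lt_div_iff₀ hδ0 (by linarith)] at hcond
    linarith
  have hL_ge : 1000 ≤ L := by
    linarith [thousand_lt_exp_seven, exp_le_exp.2 (show (7 : ℝ) ≤ 7.7 by norm_num)]
  rw [rpow_def_of_pos hx0, rpow_def_of_pos hx0, mul_comm, mul_comm (log x), div_eq_mul_inv]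
  calc exp (-β0 * L) / (1 - β0) + exp ((β0 - 1) * L) / β0 ≤ 1.0043 * exp (-(δ * L)) :=
        siegel_bound_of_log hL_ge hδ0 hδ_le (by nlinarith) hβ1 hβ2
    _ < 1.0043 * (L ^ A)⁻¹ := by gcongr; exact exp_neg_mul_lt_inv_rpow hL0 hAδ
end
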